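/- arXiv:2310.16560 — 2 statements merged into one kernel-verified Lean document; each statement's English description precedes it below -/
import Mathlib

section
/- (Closed-form solution of the graph reconstruction objective.) Let H ∈ ℝ^{n×d}, H₀ ∈ ℝ^{n×d}, Â_k ∈ ℝ^{n×n} for k=1..K, scalars γ ∈ [0,1), β₁,β₂ > 0, λ_k ∈ ℝ. The minimizer over Z ∈ ℝ^{n×n} of ‖H - (1-γ)ZH - γH₀‖_F² + β₁‖Z‖_F² + β₂‖Z - Σ_k λ_kÂ^k‖_F² is Z* = [(1-γ)HHᵀ + β₂Σ_kλ_kÂ^k - γ(1-γ)H₀Hᵀ]·[(1-γ)²HHᵀ + (β₁+β₂)I_n]⁻¹. -/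
open Matrix Finset

/-!
The objective is a quadratic function of `Z` with positive definite quadratic part: expanding
around any `Z`, the increment `D` contributes `(1-γ)²‖DH‖² + (β₁+β₂)‖D‖²` plus a term linear
in `D` whose coefficient (half the gradient) is `Z P - Q`, with
`P = (1-γ)²HHᵀ + (β₁+β₂)I` and `Q = (1-γ)HHᵀ + β₂ M - γ(1-γ)H₀Hᵀ`. Since `P` is positive
definite it is invertible, so `Z* = Q P⁻¹` annihilates the linear term and every `D ≠ 0`
strictly increases the objective.
-/

namespace Matrix

variable {m n : Type*} [Fintype m] [Fintype n]

def frobeniusInner (X Y : Matrix m n ℝ) : ℝ :=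
  ∑ i, ∑ j, X i j * Y i j

lemma frobeniusInner_comm (X Y : Matrix m n ℝ) : frobeniusInner X Y = frobeniusInner Y X := by
  simp only [frobeniusInner, mul_comm]

lemma frobeniusInner_zero_left (X : Matrix m n ℝ) : frobeniusInner 0 X = 0 := by
  simp [frobeniusInner]

lemma frobeniusInner_add_left (X Y W : Matrix m n ℝ) :
    frobeniusInner (X + Y) W = frobeniusInner X W + frobeniusInner Y W := by
  simp only [frobeniusInner, add_apply, add_mul, sum_add_distrib]

lemma frobeniusInner_sub_left (X Y W : Matrix m n ℝ) :
    frobeniusInner (X - Y) W = frobeniusInner X W - frobeniusInner Y W := by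
  simp only [frobeniusInner, sub_apply, sub_mul, sum_sub_distrib]

lemma frobeniusInner_smul_left (c : ℝ) (X W : Matrix m n ℝ) :
    frobeniusInner (c • X) W = c * frobeniusInner X W := by
  simp only [frobeniusInner, smul_apply, smul_eq_mul, mul_sum, mul_assoc]

lemma frobeniusInner_add_right (X Y W : Matrix m n ℝ) :
    frobeniusInner W (X + Y) = frobeniusInner W X + frobeniusInner W Y := by
  simp only [frobeniusInner_comm W, frobeniusInner_add_left]

lemma frobeniusInner_sub_right (X Y W : Matrix m n ℝ) :
    frobeniusInner W (X - Y) = frobeniusInner W X - frobeniusInner W Y := by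
  simp only [frobeniusInner_comm W, frobeniusInner_sub_left]

lemma frobeniusInner_smul_right (c : ℝ) (X W : Matrix m n ℝ) :
    frobeniusInner W (c • X) = c * frobeniusInner W X := by
  simp only [frobeniusInner_comm W, frobeniusInner_smul_left]

lemma frobeniusInner_self (X : Matrix m n ℝ) :
    frobeniusInner X X = ∑ i, ∑ j, X i j ^ 2 := by
  simp only [frobeniusInner, sq]

lemma frobeniusInner_self_nonneg (X : Matrix m n ℝ) : 0 ≤ frobeniusInner X X :=
  sum_nonneg fun _ _ => sum_nonneg fun _ _ => mul_self_nonneg _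

lemma frobeniusInner_self_pos {X : Matrix m n ℝ} (hX : X ≠ 0) : 0 < frobeniusInner X X := by
  obtain ⟨i, j, hij⟩ : ∃ i j, X i j ≠ 0 := by
    by_contra! h
    exact hX (ext h)
  refine sum_pos' (fun _ _ => sum_nonneg fun _ _ => mul_self_nonneg _) ⟨i, mem_univ i, ?_⟩
  exact sum_pos' (fun _ _ => mul_self_nonneg _) ⟨j, mem_univ j, mul_self_pos.mpr hij⟩

lemma frobeniusInner_mul_right {k : Type*} [Fintype k] (X : Matrix m n ℝ) (D : Matrix m k ℝ)
    (H : Matrix k n ℝ) : frobeniusInner X (D * H) = frobeniusInner (X * Hᵀ) D := by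
  simp only [frobeniusInner, mul_apply, transpose_apply, mul_sum, sum_mul]
  refine sum_congr rfl fun i _ => ?_
  rw [sum_comm]
  exact sum_congr rfl fun _ _ => sum_congr rfl fun _ _ => by ring

lemma frobeniusInner_add_self (X Y : Matrix m n ℝ) :
    frobeniusInner (X + Y) (X + Y) =
      frobeniusInner X X + 2 * frobeniusInner X Y + frobeniusInner Y Y := by
  simp only [frobeniusInner_add_left, frobeniusInner_add_right, frobeniusInner_comm Y X]
  ring

lemma frobeniusInner_sub_self (X Y : Matrix m n ℝ) :
    frobeniusInner (X - Y) (X - Y) =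
      frobeniusInner X X - 2 * frobeniusInner X Y + frobeniusInner Y Y := by
  simp only [frobeniusInner_sub_left, frobeniusInner_sub_right, frobeniusInner_comm Y X]
  ring

lemma posDef_smul_mul_transpose_add_smul_one [DecidableEq m] (H : Matrix m n ℝ) {a b : ℝ}
    (ha : 0 ≤ a) (hb : 0 < b) : (a • (H * Hᵀ) + b • (1 : Matrix m m ℝ)).PosDef := by
  have hHH : (H * Hᵀ).PosSemidef := by
    simpa only [conjTranspose_eq_transpose_of_trivial] using posSemidef_self_mul_conjTranspose H
  exact PosDef.posSemidef_add (hHH.smul ha) (PosDef.one.smul hb)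

end Matrix

namespace GraphReconstruction

variable {m k : Type*} [Fintype m] [Fintype k]
  (H H₀ : Matrix m k ℝ) (M : Matrix m m ℝ) (γ β₁ β₂ : ℝ)

def fitError (Z : Matrix m m ℝ) : Matrix m k ℝ :=
  H - (1 - γ) • (Z * H) - γ • H₀

def loss (Z : Matrix m m ℝ) : ℝ :=
  frobeniusInner (fitError H H₀ γ Z) (fitError H H₀ γ Z) + β₁ * frobeniusInner Z Z +
    β₂ * frobeniusInner (Z - M) (Z - M)

def halfGradient (Z : Matrix m m ℝ) : Matrix m m ℝ :=
  β₁ • Z + β₂ • (Z - M) - (1 - γ) • (fitError H H₀ γ Z * Hᵀ)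

lemma loss_add (Z D : Matrix m m ℝ) :
    loss H H₀ M γ β₁ β₂ (Z + D) = loss H H₀ M γ β₁ β₂ Z +
      2 * frobeniusInner (halfGradient H H₀ M γ β₁ β₂ Z) D +
      ((1 - γ) ^ 2 * frobeniusInner (D * H) (D * H) + (β₁ + β₂) * frobeniusInner D D) := by
  have hres : fitError H H₀ γ (Z + D) = fitError H H₀ γ Z - (1 - γ) • (D * H) := by
    simp only [fitError, Matrix.add_mul]
    module
  rw [loss, loss, hres, add_sub_right_comm Z D M, frobeniusInner_sub_self,
    frobeniusInner_add_self, frobeniusInner_add_self]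
  simp only [halfGradient, frobeniusInner_smul_left, frobeniusInner_smul_right,
    frobeniusInner_add_left, frobeniusInner_sub_left]
  rw [frobeniusInner_mul_right _ D H]
  ring

lemma loss_lt_loss_add_of_halfGradient_eq_zero (hβ : 0 < β₁ + β₂) {Z D : Matrix m m ℝ}
    (hZ : halfGradient H H₀ M γ β₁ β₂ Z = 0) (hD : D ≠ 0) :
    loss H H₀ M γ β₁ β₂ Z < loss H H₀ M γ β₁ β₂ (Z + D) := by
  have hDH : 0 ≤ (1 - γ) ^ 2 * frobeniusInner (D * H) (D * H) :=
    mul_nonneg (sq_nonneg _) (frobeniusInner_self_nonneg _)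
  have hDD : 0 < (β₁ + β₂) * frobeniusInner D D := mul_pos hβ (frobeniusInner_self_pos hD)
  rw [loss_add, hZ, frobeniusInner_zero_left]
  linarith

lemma halfGradient_eq [DecidableEq m] (Z : Matrix m m ℝ) :
    halfGradient H H₀ M γ β₁ β₂ Z =
      Z * ((1 - γ) ^ 2 • (H * Hᵀ) + (β₁ + β₂) • (1 : Matrix m m ℝ)) -
        ((1 - γ) • (H * Hᵀ) + β₂ • M - (γ * (1 - γ)) • (H₀ * Hᵀ)) := by
  simp only [halfGradient, fitError, Matrix.sub_mul, Matrix.smul_mul, Matrix.mul_add,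
    Matrix.mul_smul, Matrix.mul_one, Matrix.mul_assoc]
  module

end GraphReconstruction

open GraphReconstruction in
theorem reconstruction_closed_form_general {n d K : ℕ} (H H₀ : Matrix (Fin n) (Fin d) ℝ)
    (A : Matrix (Fin n) (Fin n) ℝ) (γ β₁ β₂ : ℝ) (lam : ℕ → ℝ)
    (hβ₁ : 0 < β₁) (hβ₂ : 0 < β₂) :
    let M : Matrix (Fin n) (Fin n) ℝ := ∑ k ∈ Finset.Icc 1 K, lam k • A ^ k
    let G : Matrix (Fin n) (Fin n) ℝ → ℝ := fun Z =>
      (∑ i, ∑ j, ((H - (1 - γ) • (Z * H) - γ • H₀) i j) ^ 2) +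
        β₁ * (∑ i, ∑ j, (Z i j) ^ 2) + β₂ * (∑ i, ∑ j, ((Z - M) i j) ^ 2)
    let Zstar : Matrix (Fin n) (Fin n) ℝ :=
      ((1 - γ) • (H * Hᵀ) + β₂ • M - (γ * (1 - γ)) • (H₀ * Hᵀ)) *
        ((1 - γ) ^ 2 • (H * Hᵀ) + (β₁ + β₂) • (1 : Matrix (Fin n) (Fin n) ℝ))⁻¹
    ∀ Z : Matrix (Fin n) (Fin n) ℝ, Z ≠ Zstar → G Zstar < G Z := by
  intro M G Zstar Z hZ
  have hβ : 0 < β₁ + β₂ := add_pos hβ₁ hβ₂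
  have hG : G = loss H H₀ M γ β₁ β₂ := by
    ext W
    simp only [G, loss, fitError, frobeniusInner_self]
  have hP := (posDef_smul_mul_transpose_add_smul_one H (sq_nonneg (1 - γ)) hβ).isUnit
  have hstationary : halfGradient H H₀ M γ β₁ β₂ Zstar = 0 := by
    rw [halfGradient_eq, sub_eq_zero]
    exact nonsing_inv_mul_cancel_right _ _ ((isUnit_iff_isUnit_det _).mp hP)
  have hlt := loss_lt_loss_add_of_halfGradient_eq_zero H H₀ M γ β₁ β₂ hβ hstationary
    (sub_ne_zero.mpr hZ)
  rwa [add_sub_cancel, ← hG] at hlt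

/-- closed-form solution of the graph reconstruction objective.
With Frobenius-norm-squared written as the sum of squared entries, the objective
`‖H - (1-γ)ZH - γH₀‖_F² + β₁‖Z‖_F² + β₂‖Z - Σ_{k=1}^K λ_k Â^k‖_F²` is uniquely
minimized at `Z* = [(1-γ)HHᵀ + β₂Σ_kλ_kÂ^k - γ(1-γ)H₀Hᵀ]·[(1-γ)²HHᵀ + (β₁+β₂)Iₙ]⁻¹`. -/
theorem reconstruction_closed_form {n d K : ℕ} (H H₀ : Matrix (Fin n) (Fin d) ℝ)
    (A : Matrix (Fin n) (Fin n) ℝ) (γ β₁ β₂ : ℝ) (lam : ℕ → ℝ)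
    (hγ : γ ∈ Set.Ico (0 : ℝ) 1) (hβ₁ : 0 < β₁) (hβ₂ : 0 < β₂) :
    let M : Matrix (Fin n) (Fin n) ℝ := ∑ k ∈ Finset.Icc 1 K, lam k • A ^ k
    let G : Matrix (Fin n) (Fin n) ℝ → ℝ := fun Z =>
      (∑ i, ∑ j, ((H - (1 - γ) • (Z * H) - γ • H₀) i j) ^ 2) +
        β₁ * (∑ i, ∑ j, (Z i j) ^ 2) + β₂ * (∑ i, ∑ j, ((Z - M) i j) ^ 2)
    let Zstar : Matrix (Fin n) (Fin n) ℝ :=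
      ((1 - γ) • (H * Hᵀ) + β₂ • M - (γ * (1 - γ)) • (H₀ * Hᵀ)) *
        ((1 - γ) ^ 2 • (H * Hᵀ) + (β₁ + β₂) • (1 : Matrix (Fin n) (Fin n) ℝ))⁻¹
    ∀ Z : Matrix (Fin n) (Fin n) ℝ, Z ≠ Zstar → G Zstar < G Z :=
  reconstruction_closed_form_general H H₀ A γ β₁ β₂ lam hβ₁ hβ₂
end

section
/- Monotonicity of the denoising bound in p: fix α ∈ (0,1], e ∈ (0,1/2), d ≥ 1, and assume P(Y=0)=P(Y=1)=1/2. Then E[(Y-Ŷ)²], given by (1/2)E[Ŷ|Y=0]² + (1/2)(E[Ŷ|Y=1]-1)² + Var(Ŷ) with E[Ŷ|Y=0] = (1-α)e+α[pe+(1-p)(1-e)], E[Ŷ|Y=1] = (1-α)(1-e)+α[p(1-e)+(1-p)e], and Var(Ŷ) = (1-α)²e(1-e)+(α²/d)[pe+(1-p)(1-e)][1-pe-(1-p)(1-e)], is strictly decreasing in p for p ∈ [1/2, 1]. -/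
set_option maxHeartbeats 1000000


/-- monotonicity of the denoising bound in `p`.  With
`P(Y=0) = P(Y=1) = 1/2`, `α ∈ (0,1]`, `e ∈ (0,1/2)`, `d ≥ 1`, the expression
`(1/2)E[Ŷ|Y=0]² + (1/2)(E[Ŷ|Y=1]-1)² + Var(Ŷ)` (with the explicit formulas for the
conditional means and the variance) is strictly decreasing in `p` on `[1/2, 1]`. -/
theorem denoising_bound_strict_anti_in_p (α e : ℝ) (d : ℕ)
    (hα : α ∈ Set.Ioc (0 : ℝ) 1) (he : e ∈ Set.Ioo (0 : ℝ) (1 / 2)) (hd : 1 ≤ d) :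
    StrictAntiOn (fun p : ℝ =>
      (1 / 2) * ((1 - α) * e + α * (p * e + (1 - p) * (1 - e))) ^ 2 +
        (1 / 2) * (((1 - α) * (1 - e) + α * (p * (1 - e) + (1 - p) * e)) - 1) ^ 2 +
        ((1 - α) ^ 2 * e * (1 - e) +
          α ^ 2 / d *
            ((p * e + (1 - p) * (1 - e)) * (1 - (p * e + (1 - p) * (1 - e))))))
      (Set.Icc (1 / 2 : ℝ) 1) := by
  obtain ⟨hα0, hα1⟩ := hα
  obtain ⟨he0, he1⟩ := he
  intro x hx y hy hxy
  obtain ⟨hx1, hx2⟩ := hx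
  obtain ⟨hy1, hy2⟩ := hy
  have hD : (1:ℝ) ≤ (d:ℝ) := by exact_mod_cast hd
  have hD0 : (0:ℝ) < (d:ℝ) := by linarith
  simp only
  rw [← sub_pos]
  set qx : ℝ := x * e + (1 - x) * (1 - e) with hqx
  set qy : ℝ := y * e + (1 - y) * (1 - e) with hqy
  have hqx0 : 0 < qx := by nlinarith
  have hqy0 : 0 < qy := by nlinarith
  have hqx2 : qx ≤ 1 / 2 := by nlinarith
  have hqy2 : qy ≤ 1 / 2 := by nlinarith
  have key :
      (1 / 2) * ((1 - α) * e + α * qx) ^ 2 +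
        (1 / 2) * (((1 - α) * (1 - e) + α * (x * (1 - e) + (1 - x) * e)) - 1) ^ 2 +
        ((1 - α) ^ 2 * e * (1 - e) + α ^ 2 / d * (qx * (1 - qx))) -
      ((1 / 2) * ((1 - α) * e + α * qy) ^ 2 +
        (1 / 2) * (((1 - α) * (1 - e) + α * (y * (1 - e) + (1 - y) * e)) - 1) ^ 2 +
        ((1 - α) ^ 2 * e * (1 - e) + α ^ 2 / d * (qy * (1 - qy)))) =
      (1 - 2 * e) * (y - x) *
        (α * (((1 - α) * e + α * qx) + ((1 - α) * e + α * qy)) +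
          α ^ 2 / d * (1 - qx - qy)) := by
    rw [hqx, hqy]
    ring
  rw [key]
  have h1 : 0 < (1 - α) * e + α * qx := by nlinarith
  have h2 : 0 < (1 - α) * e + α * qy := by nlinarith
  have h3 : 0 ≤ α ^ 2 / d * (1 - qx - qy) := by
    apply mul_nonneg (by positivity); linarith
  have h4 : 0 < α * (((1 - α) * e + α * qx) + ((1 - α) * e + α * qy)) := by positivity
  exact mul_pos (mul_pos (by linarith : (0:ℝ) < 1 - 2 * e) (by linarith : (0:ℝ) < y - x))
    (add_pos_of_pos_of_nonneg h4 h3)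
end
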